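/- Let R be a one-dimensional Noetherian local domain with fraction field K, integral closure R̄, and reduced completion. Let J be a non-zero ideal of R such that the fractional ideal R:_K J = {α ∈ K | αJ ⊆ R} is contained in R̄. Then for every ideal I of R isomorphic to J as an R-module, λ(R/I) ≥ λ(R/J); i.e., J achieves the minimal colength among all ideals isomorphic to it. -/

import Mathlib

/-!
An isomorphism `I ≃ J` is multiplication by `β = x / a` for any `0 ≠ x ∈ I` and `a` its image,
so `x • J = a • I` and, writing `ord r = λ(R/rR)`, `λ(R/J) + ord x = λ(R/I) + ord a`.
Now `β ∈ R :_K J ⊆ R̄`, so `β` stabilises the nonzero ideal `M = d • R[β] ⊆ R`, where `d` is a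
common denominator of the finite `R`-module `R[β]`. Hence `x • M ⊆ a • M`, which gives
`ord a ≤ ord x`; since `dim R = 1`, `ord x` is finite and can be cancelled.
-/

set_option synthInstance.maxHeartbeats 1000000
set_option maxHeartbeats 1000000

open IsLocalRing

/-- The length of an `R`-module `M`, defined as the Krull dimension of its lattice of
submodules (the supremum of lengths of strict chains of submodules), valued in `ℕ∞`. -/
noncomputable def rlength (R M : Type*) [Ring R] [AddCommGroup M] [Module R M] : ℕ∞ :=
  WithBot.unbotD 0 (Order.krullDim (Submodule R M))

open scoped Pointwise nonZeroDivisors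

lemma rlength_eq_length (R M : Type*) [Ring R] [AddCommGroup M] [Module R M] :
    rlength R M = Module.length R M := by
  rw [rlength, ← Module.coe_length, WithBot.unbotD_coe]

namespace Ideal

variable {R : Type*} [CommRing R]

lemma length_quotient_smul {a : R} (ha : a ∈ R⁰) (I : Ideal R) :
    Module.length R (R ⧸ a • I) = Module.length R (R ⧸ I) + Ring.ord R a :=
  Module.length_eq_add_of_exact _ _ (mulQuot_injective I ha) (quotOfMul_surjective I)
    (exact_mulQuot_quotOfMul I)

lemma smul_linearMap_comm {M : Type*} [AddCommGroup M] [Module R M] {I : Ideal R}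
    (f : I →ₗ[R] M) (x y : I) : (x : R) • f y = (y : R) • f x := by
  rw [← f.map_smul, ← f.map_smul]
  congr 1
  ext
  exact mul_comm _ _

lemma mul_linearMap_comm {I J : Ideal R} (f : I →ₗ[R] J) (x y : I) :
    (x : R) * f y = (f x : R) * y := by
  simpa only [Submodule.coe_smul, smul_eq_mul, mul_comm _ (y : R)] using
    congrArg Subtype.val (smul_linearMap_comm f x y)

lemma smul_eq_smul_of_linearEquiv {I J : Ideal R} (e : I ≃ₗ[R] J) {x : R} (hx : x ∈ I) :
    x • J = (e ⟨x, hx⟩ : R) • I := by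
  ext z
  simp only [Submodule.mem_smul_pointwise_iff_exists, smul_eq_mul]
  constructor
  · rintro ⟨j, hj, rfl⟩
    obtain ⟨y, hy⟩ := e.surjective ⟨j, hj⟩
    exact ⟨y, y.2, by simpa [hy] using (mul_linearMap_comm e.toLinearMap ⟨x, hx⟩ y).symm⟩
  · rintro ⟨y, hy, rfl⟩
    exact ⟨_, (e ⟨y, hy⟩).2, mul_linearMap_comm e.toLinearMap ⟨x, hx⟩ ⟨y, hy⟩⟩

lemma exists_algebraMap_eq_div_mul_of_linearEquiv (K : Type*) [Field K] [Algebra R K]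
    [IsFractionRing R K] {I J : Ideal R} (e : I ≃ₗ[R] J) {x : R} (hx : x ∈ I)
    (ha : (e ⟨x, hx⟩ : R) ≠ 0) {j : R} (hj : j ∈ J) :
    ∃ r : R,
      algebraMap R K r = algebraMap R K x / algebraMap R K (e ⟨x, hx⟩) * algebraMap R K j := by
  obtain ⟨y, hy⟩ := e.surjective ⟨j, hj⟩
  have hxy := mul_linearMap_comm e.toLinearMap ⟨x, hx⟩ y
  simp only [LinearEquiv.coe_coe, hy] at hxy
  refine ⟨y, ?_⟩
  have ha' : algebraMap R K (e ⟨x, hx⟩) ≠ 0 :=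
    (map_ne_zero_iff _ (IsFractionRing.injective R K)).mpr ha
  rw [div_mul_eq_mul_div, eq_div_iff ha', ← map_mul, ← map_mul, hxy, mul_comm]

variable [IsDomain R] [IsNoetherianRing R] [Ring.KrullDimLE 1 R]

lemma length_quotient_ne_top {I : Ideal R} (hI : I ≠ ⊥) : Module.length R (R ⧸ I) ≠ ⊤ := by
  obtain ⟨d, hdI, hd0⟩ := Submodule.exists_mem_ne_zero_of_ne_bot hI
  have hle : span {d} ≤ I := (span_singleton_le_iff_mem I).mpr hdI
  refine ne_top_of_le_ne_top (Ring.ord_ne_top (mem_nonZeroDivisors_of_ne_zero hd0)) ?_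
  exact Module.length_le_of_surjective _ (Submodule.factor_surjective hle)

end Ideal

section

variable {R K : Type*} [CommRing R] [Nontrivial R] [Field K] [Algebra R K] [IsFractionRing R K]

lemma IsIntegral.exists_ideal_ne_bot_forall_mul_mem {β : K} (hβ : IsIntegral R β) :
    ∃ M : Ideal R, M ≠ ⊥ ∧ ∀ m ∈ M, ∃ m' ∈ M, algebraMap R K m' = β * algebraMap R K m := by
  set T := Subalgebra.toSubmodule (Algebra.adjoin R {β})
  obtain ⟨d, hd, hdT⟩ := FractionalIdeal.isFractional_of_fg (S := R⁰) hβ.fg_adjoin_singleton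
  have hβT : ∀ t ∈ T, β * t ∈ T := fun t ht =>
    (Algebra.adjoin R {β}).mul_mem (Algebra.self_mem_adjoin_singleton R β) ht
  refine ⟨(d • T).comap (Algebra.linearMap R K),
    fun hM => nonZeroDivisors.coe_ne_zero ⟨d, hd⟩ ?_, ?_⟩
  · rw [← Submodule.mem_bot R, ← hM, Submodule.mem_comap]
    refine ⟨1, (Algebra.adjoin R {β}).one_mem, ?_⟩
    simp [Algebra.smul_def]
  · rintro m ⟨t, ht, hm⟩
    obtain ⟨m', hm'⟩ := hdT _ (hβT t ht)
    refine ⟨m', ⟨β * t, hβT t ht, hm'.symm⟩, ?_⟩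
    rw [hm', ← mul_smul_comm]
    exact congrArg (β * ·) hm

end

namespace Ring

variable {R : Type*} [CommRing R] [IsDomain R] [IsNoetherianRing R] [Ring.KrullDimLE 1 R]

lemma ord_le_ord_of_smul_le_smul {a b : R} (ha : a ≠ 0) (hb : b ≠ 0) {M : Ideal R} (hM : M ≠ ⊥)
    (h : b • M ≤ a • M) : ord R a ≤ ord R b := by
  have hlen := Module.length_le_of_surjective _ (Submodule.factor_surjective h)
  rwa [Ideal.length_quotient_smul (mem_nonZeroDivisors_of_ne_zero ha),
    Ideal.length_quotient_smul (mem_nonZeroDivisors_of_ne_zero hb),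
    ENat.add_le_add_iff_left (Ideal.length_quotient_ne_top hM)] at hlen

lemma ord_le_ord_of_isIntegral_div (K : Type*) [Field K] [Algebra R K] [IsFractionRing R K]
    {a b : R} (ha : a ≠ 0) (hb : b ≠ 0) (h : IsIntegral R (algebraMap R K b / algebraMap R K a)) :
    ord R a ≤ ord R b := by
  obtain ⟨M, hM0, hM⟩ := h.exists_ideal_ne_bot_forall_mul_mem
  refine ord_le_ord_of_smul_le_smul ha hb hM0 ?_
  rintro _ ⟨m, hm, rfl⟩
  obtain ⟨m', hm'M, hm'⟩ := hM m hm
  refine ⟨m', hm'M, IsFractionRing.injective R K ?_⟩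
  have ha' : algebraMap R K a ≠ 0 := (map_ne_zero_iff _ (IsFractionRing.injective R K)).mpr ha
  change algebraMap R K (a * m') = algebraMap R K (b * m)
  rw [map_mul, map_mul, hm']
  field_simp

end Ring

theorem stmt1_general (R K : Type*) [CommRing R] [IsDomain R] [IsNoetherianRing R]
    (hdim : ringKrullDim R = 1)
    [Field K] [Algebra R K] [IsFractionRing R K]
    (J : Ideal R) (hJ : J ≠ ⊥)
    (hcolon : ∀ α : K, (∀ j ∈ J, ∃ r : R, algebraMap R K r = α * algebraMap R K j) →
      α ∈ integralClosure R K)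
    (I : Ideal R) (hiso : Nonempty (I ≃ₗ[R] J)) :
    rlength R (R ⧸ J) ≤ rlength R (R ⧸ I) := by
  obtain ⟨e⟩ := hiso
  have : Ring.KrullDimLE 1 R := Ring.krullDimLE_iff.mpr hdim.le
  have hI : I ≠ ⊥ := by
    rintro rfl
    have : Subsingleton J := e.symm.toEquiv.subsingleton
    exact hJ (Submodule.eq_bot_of_subsingleton)
  obtain ⟨x, hxI, hx0⟩ := Submodule.exists_mem_ne_zero_of_ne_bot hI
  set a : R := (e ⟨x, hxI⟩ : J).1
  have ha0 : a ≠ 0 := by simpa [a] using hx0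
  have hβ : IsIntegral R (algebraMap R K x / algebraMap R K a) :=
    hcolon _ fun _ hj => Ideal.exists_algebraMap_eq_div_mul_of_linearEquiv K e hxI ha0 hj
  have hcolength : Module.length R (R ⧸ J) + Ring.ord R x =
      Module.length R (R ⧸ I) + Ring.ord R a := by
    rw [← Ideal.length_quotient_smul (mem_nonZeroDivisors_of_ne_zero hx0),
      ← Ideal.length_quotient_smul (mem_nonZeroDivisors_of_ne_zero ha0),
      Ideal.smul_eq_smul_of_linearEquiv e hxI]
  rw [rlength_eq_length, rlength_eq_length,
    ← ENat.add_le_add_iff_right (Ring.ord_ne_top (mem_nonZeroDivisors_of_ne_zero hx0)), hcolength]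
  exact add_le_add le_rfl (Ring.ord_le_ord_of_isIntegral_div K ha0 hx0 hβ)

/-- if `R :_K J ⊆ R̄` then `J` achieves the minimal colength among all
ideals isomorphic to it. -/
theorem stmt1 (R K : Type*) [CommRing R] [IsDomain R] [IsNoetherianRing R] [IsLocalRing R]
    (hdim : ringKrullDim R = 1)
    [Field K] [Algebra R K] [IsFractionRing R K]
    (hred : IsReduced (AdicCompletion (maximalIdeal R) R))
    (J : Ideal R) (hJ : J ≠ ⊥)
    (hcolon : ∀ α : K, (∀ j ∈ J, ∃ r : R, algebraMap R K r = α * algebraMap R K j) →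
      α ∈ integralClosure R K)
    (I : Ideal R) (hiso : Nonempty (I ≃ₗ[R] J)) :
    rlength R (R ⧸ J) ≤ rlength R (R ⧸ I) :=
  stmt1_general R K hdim J hJ hcolon I hiso
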